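/- arXiv:1908.05857 — 2 statements merged into one kernel-verified Lean document; each statement's English description precedes it below -/
import Mathlib

section
/- For 0 < ρ < 1, μ > 0, t ≥ 0 and positive integer n, the series ∑_{v=0}^{∞} ρ^{nv} F(v+1, μt), where F(v+1,z) = γ(v+1,z)/Γ(v+1) is the regularized lower incomplete Gamma function, equals (1 - e^{-μt(1-ρ^n)})/(1 - ρ^n). -/
/-!
Since `Γ(v + 1) = v!`, the `v`-th term is `∫₀ᶻ (rs)^v / v! · e^{-s} ds` with `r = ρⁿ` and
`z = μt`. Summing under the integral (dominated by `(|r||z|)^v / v! · e^{|z|}`), the exponential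
series turns the integrand into `e^{rs} e^{-s} = e^{-(1-r)s}`, whose integral over `[0, z]` is
`(1 - e^{-(1-r)z}) / (1 - r)`.
-/

open Real Nat intervalIntegral

/-- the lower incomplete Gamma function `γ(s, x) = ∫₀ˣ t^{s-1} e^{-t} dt`. -/
noncomputable def lowerGamma (s x : ℝ) : ℝ := ∫ t in (0 : ℝ)..x, t ^ (s - 1) * Real.exp (-t)

lemma lowerGamma_natCast_add_one (v : ℕ) (x : ℝ) :
    lowerGamma (v + 1) x = ∫ s in 0..x, s ^ v * exp (-s) := by
  simp only [lowerGamma, add_sub_cancel_right, rpow_natCast]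

lemma integral_exp_neg_mul_const {c : ℝ} (hc : c ≠ 0) (z : ℝ) :
    ∫ s in 0..z, exp (-(s * c)) = (1 - exp (-(z * c))) / c := by
  rw [integral_comp_mul_right (fun s => exp (-s)) hc, integral_comp_neg, integral_exp]
  simp
  field_simp

lemma hasSum_pow_mul_pow_mul_exp_neg_div_factorial (r s : ℝ) :
    HasSum (fun v : ℕ => r ^ v * (s ^ v * exp (-s)) / v !) (exp (-(s * (1 - r)))) := by
  have h := (NormedSpace.expSeries_div_hasSum_exp (r * s)).mul_right (exp (-s))
  rw [← exp_eq_exp_ℝ, ← exp_add, show r * s + -s = -(s * (1 - r)) by ring] at h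
  exact h.congr_fun fun v => by ring

lemma abs_le_abs_of_mem_uIoc_zero {s z : ℝ} (hs : s ∈ Set.uIoc 0 z) : |s| ≤ |z| := by
  simpa using Set.abs_sub_left_of_mem_uIcc (Set.uIoc_subset_uIcc hs)

theorem hasSum_pow_mul_lowerGamma_div_Gamma (r z : ℝ) :
    HasSum (fun v : ℕ => r ^ v * (lowerGamma (v + 1) z / Gamma (v + 1)))
      (∫ s in 0..z, exp (-(s * (1 - r)))) := by
  have hterm (v : ℕ) : r ^ v * (lowerGamma (v + 1) z / Gamma (v + 1))
      = ∫ s in 0..z, r ^ v * (s ^ v * exp (-s)) / v ! := by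
    rw [lowerGamma_natCast_add_one, Gamma_nat_eq_factorial, integral_div, integral_const_mul,
      mul_div_assoc]
  simp only [hterm]
  refine hasSum_integral_of_dominated_convergence
    (fun v _ => (|r| * |z|) ^ v / v ! * exp |z|) (fun v => ?_) (fun v => ?_)
    (.of_forall fun _ _ => (summable_pow_div_factorial _).mul_right _) intervalIntegrable_const
    (.of_forall fun s _ => hasSum_pow_mul_pow_mul_exp_neg_div_factorial r s)
  · exact (by fun_prop : Continuous fun s : ℝ => r ^ v * (s ^ v * exp (-s)) / v !)
      |>.aestronglyMeasurable
  · refine .of_forall fun s hs => ?_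
    have hsz := abs_le_abs_of_mem_uIoc_zero hs
    rw [norm_eq_abs, abs_div, abs_mul, abs_mul, abs_pow, abs_pow, abs_exp, Nat.abs_cast, mul_pow,
      div_mul_eq_mul_div, ← mul_assoc]
    gcongr
    exact (neg_le_abs s).trans hsz

theorem geom_weighted_regIncGamma_sum_general (rho mu t : ℝ) (n : ℕ) (hn : 1 ≤ n)
    (h0 : 0 < rho) (h1 : rho < 1) :
    ∑' v : ℕ, rho ^ (n * v) * (lowerGamma ((v : ℝ) + 1) (mu * t) / Real.Gamma ((v : ℝ) + 1))
      = (1 - Real.exp (-(mu * t * (1 - rho ^ n)))) / (1 - rho ^ n) := by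
  have hr : 1 - rho ^ n ≠ 0 := (sub_pos.2 (pow_lt_one₀ h0.le h1 (by omega))).ne'
  simp only [pow_mul]
  rw [(hasSum_pow_mul_lowerGamma_div_Gamma (rho ^ n) (mu * t)).tsum_eq,
    integral_exp_neg_mul_const hr]

/-- For `0 < ρ < 1`, `μ > 0`, `t ≥ 0` and positive integer `n`, the series
`∑_{v} ρ^{nv} F(v+1, μt)` equals `(1 - e^{-μt(1-ρ^n)})/(1 - ρ^n)`. -/
theorem geom_weighted_regIncGamma_sum (rho mu t : ℝ) (n : ℕ) (hn : 1 ≤ n)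
    (h0 : 0 < rho) (h1 : rho < 1) (hmu : 0 < mu) (ht : 0 ≤ t) :
    ∑' v : ℕ, rho ^ (n * v) * (lowerGamma ((v : ℝ) + 1) (mu * t) / Real.Gamma ((v : ℝ) + 1))
      = (1 - Real.exp (-(mu * t * (1 - rho ^ n)))) / (1 - rho ^ n) :=
  geom_weighted_regIncGamma_sum_general rho mu t n hn h0 h1
end

section
/- Let g ~ Gamma(M, 1) with integer M ≥ 1, and define ϱ(s) = ∫₀^R (1 - E[e^{-s g ℓ(r)}]) r dr with ℓ(r) = max(r,d₀)^{-α}, 0 < d₀ < R, α > 2, s > 0. Then ϱ(s) = (R²/2)(1 - E[e^{-s g R^{-α}}]) + (1/2) E[(s g)^{2/α} (Γ(1 - 2/α, s g R^{-α}) - Γ(1 - 2/α, s g d₀^{-α}))], where E[e^{-s g R^{-α}}] = (1 + s R^{-α})^{-M}. -/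
open MeasureTheory Set Real Filter Topology

/-! Fubini exchanges the radial integral with the expectation over `g`, which reduces everything
to the deterministic integral `∫₀^R e^{-c ℓ(r)} r dr` with `c = s g`. On `(0, d₀]` the integrand
is `e^{-c d₀^{-α}} r`; on `[d₀, R]` it has the antiderivative
`r²/2 · e^{-c r^{-α}} - c^{2/α}/2 · Γ(1 - 2/α, c r^{-α})`, found by substituting `u = c r^{-α}` and
integrating by parts once. The Laplace transform `E[e^{-ug}] = (1 + u)^{-M}` is Euler's integral
for `Γ(M)` with rate `1 + u`. -/

noncomputable def upperIncompleteGamma (p y : ℝ) : ℝ := ∫ t in Ioi y, t ^ (p - 1) * exp (-t)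

lemma integrableOn_rpow_mul_exp_neg_Ioi (p : ℝ) {y : ℝ} (hy : 0 < y) :
    IntegrableOn (fun t : ℝ => t ^ (p - 1) * exp (-t)) (Ioi y) := by
  have hcont : ContinuousOn (fun t : ℝ => exp (-t) * t ^ (p - 1)) (Ici y) :=
    continuousOn_id.neg.rexp.mul
      (continuousOn_id.rpow_const fun t ht => Or.inl (hy.trans_le ht).ne')
  exact (integrable_of_isBigO_exp_neg one_half_pos hcont
    (Gamma_integrand_isLittleO _).isBigO).congr_fun (fun t _ => mul_comm _ _) measurableSet_Ioi

lemma hasDerivAt_upperIncompleteGamma (p : ℝ) {y : ℝ} (hy : 0 < y) :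
    HasDerivAt (upperIncompleteGamma p) (-(y ^ (p - 1) * exp (-y))) y := by
  set f : ℝ → ℝ := fun t => t ^ (p - 1) * exp (-t)
  have hf : IntegrableOn f (Ioi (y / 2)) := integrableOn_rpow_mul_exp_neg_Ioi p (half_pos hy)
  have hlocal : (fun z => upperIncompleteGamma p (y / 2) - ∫ t in y / 2..z, f t)
      =ᶠ[𝓝 y] upperIncompleteGamma p := by
    filter_upwards [lt_mem_nhds (half_lt_self hy)] with z hz
    rw [← intervalIntegral.integral_Ioi_sub_Ioi hf hz.le]
    exact sub_sub_cancel _ _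
  have hFTC : HasDerivAt (fun z => ∫ t in y / 2..z, f t) (f y) y :=
    intervalIntegral.integral_hasDerivAt_right
      ((intervalIntegrable_iff_integrableOn_Ioc_of_le (half_le_self hy.le)).2
        (hf.mono_set Ioc_subset_Ioi_self))
      (by fun_prop : Measurable f).stronglyMeasurable.stronglyMeasurableAtFilter
      ((continuousAt_id.rpow_const (Or.inl hy.ne')).mul
        (continuous_exp.comp continuous_neg).continuousAt)
  exact (hFTC.const_sub _).congr_of_eventuallyEq hlocal.symm

lemma hasDerivAt_sq_mul_exp_neg_sub_upperIncompleteGamma {c α r : ℝ} (hc : 0 < c) (hα : α ≠ 0)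
    (hr : 0 < r) :
    HasDerivAt (fun r => r ^ 2 / 2 * exp (-(c * r ^ (-α)))
        - 1 / 2 * c ^ (2 / α) * upperIncompleteGamma (1 - 2 / α) (c * r ^ (-α)))
      (exp (-(c * r ^ (-α))) * r) r := by
  have hpow : HasDerivAt (fun r => c * r ^ (-α)) (c * (-α * r ^ (-α - 1))) r :=
    (hasDerivAt_rpow_const (Or.inl hr.ne')).const_mul c
  have hGamma := (hasDerivAt_upperIncompleteGamma (1 - 2 / α)
    (mul_pos hc (rpow_pos_of_pos hr (-α)))).comp r hpow
  refine ((((hasDerivAt_pow 2 r).div_const 2).mul hpow.neg.exp).sub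
    (hGamma.const_mul (1 / 2 * c ^ (2 / α)))).congr_deriv ?_
  -- the scaling `c ^ (2/α) (c r^{-α})^{-2/α} = r²` makes the two `α`-terms cancel
  have hscale : c ^ (2 / α) * (c * r ^ (-α)) ^ (1 - 2 / α - 1) = r ^ 2 := by
    rw [sub_sub_cancel_left, mul_rpow hc.le (rpow_nonneg hr.le _), ← rpow_mul hr.le,
      ← mul_assoc, ← rpow_add hc, add_neg_cancel, rpow_zero, one_mul,
      show -α * -(2 / α) = ((2 : ℕ) : ℝ) by field_simp; norm_num, rpow_natCast]
  simp only [Pi.neg_apply]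
  linear_combination -(c * α * r ^ (-α - 1) * exp (-(c * r ^ (-α))) / 2) * hscale

lemma setIntegral_exp_neg_mul_max_rpow_neg_mul_id {c d R α : ℝ} (hc : 0 < c) (hd : 0 < d)
    (hdR : d ≤ R) (hα : α ≠ 0) :
    ∫ r in Ioc 0 R, exp (-(c * max r d ^ (-α))) * r
      = R ^ 2 / 2 * exp (-(c * R ^ (-α)))
        - 1 / 2 * c ^ (2 / α) * (upperIncompleteGamma (1 - 2 / α) (c * R ^ (-α))
          - upperIncompleteGamma (1 - 2 / α) (c * d ^ (-α))) := by
  have hcont : Continuous fun r => exp (-(c * max r d ^ (-α))) * r := by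
    have : Continuous fun r => max r d ^ (-α) :=
      (continuous_id.max continuous_const).rpow_const fun r =>
        Or.inl (hd.trans_le (le_max_right r d)).ne'
    fun_prop
  have hnear : ∫ r in Ioc 0 d, exp (-(c * max r d ^ (-α))) * r
      = d ^ 2 / 2 * exp (-(c * d ^ (-α))) := by
    rw [setIntegral_congr_fun measurableSet_Ioc (g := fun r => exp (-(c * d ^ (-α))) * r)
      fun r hr => by rw [max_eq_right hr.2], ← intervalIntegral.integral_of_le hd.le,
      intervalIntegral.integral_const_mul, integral_id]
    ring
  have hfar : ∫ r in Ioc d R, exp (-(c * max r d ^ (-α))) * r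
      = ∫ r in d..R, exp (-(c * r ^ (-α))) * r := by
    rw [intervalIntegral.integral_of_le hdR]
    exact setIntegral_congr_fun measurableSet_Ioc fun r hr => by rw [max_eq_left hr.1.le]
  rw [← Ioc_union_Ioc_eq_Ioc hd.le hdR, setIntegral_union (Ioc_disjoint_Ioc_of_le le_rfl)
    measurableSet_Ioc hcont.integrableOn_Ioc hcont.integrableOn_Ioc, hnear, hfar,
    intervalIntegral.integral_eq_sub_of_hasDerivAt
      (fun r hr => hasDerivAt_sq_mul_exp_neg_sub_upperIncompleteGamma hc hα
        (hd.trans_le (uIcc_of_le hdR ▸ hr).1))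
      (ContinuousOn.intervalIntegrable fun r hr => ?_)]
  · ring
  have hr : 0 < r := hd.trans_le (uIcc_of_le hdR ▸ hr).1
  exact ((continuousAt_id.rpow_const (Or.inl hr.ne')).const_mul c).neg.rexp.mul continuousAt_id
    |>.continuousWithinAt

section Fubini

variable {α β : Type*} [MeasurableSpace α] [MeasurableSpace β] {μ : Measure α} {ν : Measure β}
  {ρ : α → ℝ} {w : β → ℝ} {K : α → β → ℝ}

lemma integrable_prod_mul_mul_of_norm_le_one (hρ : Integrable ρ μ) (hw : Integrable w ν)
    (hK : AEStronglyMeasurable (Function.uncurry K) (μ.prod ν))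
    (hK1 : ∀ᵐ x ∂μ, ∀ y, ‖K x y‖ ≤ 1) :
    Integrable (fun z : α × β => ρ z.1 * (K z.1 z.2 * w z.2)) (μ.prod ν) := by
  refine (hρ.mul_prod hw).mono (hρ.1.comp_fst.mul (hK.mul hw.1.comp_snd)) ?_
  filter_upwards [Measure.quasiMeasurePreserving_fst.ae hK1] with z hz
  calc ‖ρ z.1 * (K z.1 z.2 * w z.2)‖ = ‖ρ z.1‖ * (‖K z.1 z.2‖ * ‖w z.2‖) := by
        simp only [norm_mul]
    _ ≤ ‖ρ z.1‖ * (1 * ‖w z.2‖) := by gcongr; exact hz z.2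
    _ = ‖ρ z.1 * w z.2‖ := by rw [one_mul, norm_mul]

variable [SFinite ν]

lemma integrable_mul_integral_mul (hρ : Integrable ρ μ) (hw : Integrable w ν)
    (hK : AEStronglyMeasurable (Function.uncurry K) (μ.prod ν))
    (hK1 : ∀ᵐ x ∂μ, ∀ y, ‖K x y‖ ≤ 1) :
    Integrable (fun x => ρ x * ∫ y, K x y * w y ∂ν) μ := by
  simp_rw [← integral_const_mul]
  exact (integrable_prod_mul_mul_of_norm_le_one hρ hw hK hK1).integral_prod_left

lemma integral_one_sub_integral_mul_mul [SFinite μ] (hρ : Integrable ρ μ) (hw : Integrable w ν)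
    (hK : AEStronglyMeasurable (Function.uncurry K) (μ.prod ν))
    (hK1 : ∀ᵐ x ∂μ, ∀ y, ‖K x y‖ ≤ 1) :
    ∫ y, (1 - ∫ x, ρ x * K x y ∂μ) * w y ∂ν
      = ∫ y, w y ∂ν - ∫ x, ρ x * ∫ y, K x y * w y ∂ν ∂μ := by
  have hprod := integrable_prod_mul_mul_of_norm_le_one hρ hw hK hK1
  have hmarginal : Integrable (fun y => ∫ x, ρ x * (K x y * w y) ∂μ) ν :=
    hprod.integral_prod_right
  simp_rw [sub_mul, one_mul, ← integral_mul_const, mul_assoc (ρ _), ← integral_const_mul]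
  rw [integral_sub hw hmarginal, ← integral_integral_swap hprod]

end Fubini

theorem integral_one_sub_integral_exp_neg_mul_max_rpow_neg {ρ : ℝ → ℝ}
    (hρ : IntegrableOn ρ (Ioi 0)) {s R d α : ℝ} (hs : 0 < s) (hd : 0 < d) (hdR : d ≤ R)
    (hα : α ≠ 0) :
    ∫ r in 0..R, (1 - ∫ x in Ioi 0, ρ x * exp (-(s * x * max r d ^ (-α)))) * r
      = R ^ 2 / 2 * (1 - ∫ x in Ioi 0, ρ x * exp (-(s * x * R ^ (-α))))
        + 1 / 2 * ∫ x in Ioi 0, ρ x * ((s * x) ^ (2 / α)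
            * (upperIncompleteGamma (1 - 2 / α) (s * x * R ^ (-α))
              - upperIncompleteGamma (1 - 2 / α) (s * x * d ^ (-α)))) := by
  have hK : AEStronglyMeasurable (Function.uncurry fun x r => exp (-(s * x * max r d ^ (-α))))
      ((volume.restrict (Ioi 0)).prod (volume.restrict (Ioc 0 R))) :=
    Measurable.aestronglyMeasurable (by fun_prop)
  have hK1 : ∀ᵐ x ∂(volume.restrict (Ioi 0)), ∀ r, ‖exp (-(s * x * max r d ^ (-α)))‖ ≤ 1 := by
    filter_upwards [ae_restrict_mem measurableSet_Ioi] with x hx r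
    rw [norm_of_nonneg (exp_pos _).le, exp_le_one_iff, neg_nonpos]
    exact mul_nonneg (mul_pos hs hx).le (rpow_nonneg (hd.le.trans (le_max_right r d)) _)
  have hw : IntegrableOn (fun r : ℝ => r) (Ioc 0 R) := continuous_id.integrableOn_Ioc
  have hρe : IntegrableOn (fun x => ρ x * exp (-(s * x * R ^ (-α)))) (Ioi 0) :=
    hρ.mul_bdd (by fun_prop) (hK1.mono fun x hx => by simpa only [max_eq_left hdR] using hx R)
  have hρI := integrable_mul_integral_mul hρ hw hK hK1
  have hradial : ∀ x ∈ Ioi (0 : ℝ), ρ x * ((s * x) ^ (2 / α)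
      * (upperIncompleteGamma (1 - 2 / α) (s * x * R ^ (-α))
        - upperIncompleteGamma (1 - 2 / α) (s * x * d ^ (-α))))
      = R ^ 2 * (ρ x * exp (-(s * x * R ^ (-α))))
        - 2 * (ρ x * ∫ r in Ioc 0 R, exp (-(s * x * max r d ^ (-α))) * r) := fun x hx => by
    rw [setIntegral_exp_neg_mul_max_rpow_neg_mul_id (mul_pos hs hx) hd hdR hα]
    ring
  rw [intervalIntegral.integral_of_le (hd.le.trans hdR),
    integral_one_sub_integral_mul_mul hρ hw hK hK1, setIntegral_congr_fun measurableSet_Ioi hradial,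
    integral_sub (hρe.const_mul _) (hρI.const_mul _), integral_const_mul, integral_const_mul,
    ← intervalIntegral.integral_of_le (hd.le.trans hdR), integral_id]
  ring

lemma integral_rpow_mul_exp_neg_div_Gamma_mul_exp_neg_mul {a k : ℝ} (ha : 0 < a) (hk : -1 < k) :
    ∫ x in Ioi 0, x ^ (a - 1) * exp (-x) / Gamma a * exp (-(k * x)) = (1 + k) ^ (-a) := by
  have hk' : 0 < 1 + k := by linarith
  have hmerge : ∀ x : ℝ, x ^ (a - 1) * exp (-x) / Gamma a * exp (-(k * x))
      = x ^ (a - 1) * exp (-((1 + k) * x)) / Gamma a := fun x => by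
    rw [div_mul_eq_mul_div, mul_assoc, ← exp_add]
    ring_nf
  simp_rw [hmerge]
  rw [integral_div, integral_rpow_mul_exp_neg_mul_Ioi ha hk',
    mul_div_cancel_right₀ _ (Gamma_pos_of_pos ha).ne', one_div, inv_rpow hk'.le, rpow_neg hk'.le]

/-- For `g ~ Gamma(M,1)` and `ϱ(s) = ∫₀^R (1 - E[e^{-s g ℓ(r)}]) r dr` with
`ℓ(r) = max(r,d₀)^{-α}`, the closed form of `ϱ(s)` in terms of upper incomplete
Gamma functions, together with `E[e^{-s g R^{-α}}] = (1+sR^{-α})^{-M}`. -/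
theorem varrho_closed_form (M : ℕ) (hM : 1 ≤ M) (s R d0 alpha : ℝ)
    (hd : 0 < d0) (hdR : d0 < R) (ha : 2 < alpha) (hs : 0 < s) :
    (∫ r in (0 : ℝ)..R,
        (1 - ∫ x in Set.Ioi (0 : ℝ),
          x ^ ((M : ℝ) - 1) * Real.exp (-x) / (Nat.factorial (M - 1) : ℝ)
            * Real.exp (-(s * x * (max r d0) ^ (-alpha)))) * r)
      = R ^ 2 / 2 * (1 - (1 + s * R ^ (-alpha)) ^ (-(M : ℝ)))
        + 1 / 2 * ∫ x in Set.Ioi (0 : ℝ),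
            x ^ ((M : ℝ) - 1) * Real.exp (-x) / (Nat.factorial (M - 1) : ℝ)
              * ((s * x) ^ (2 / alpha)
                * ((∫ t in Set.Ioi (s * x * R ^ (-alpha)), t ^ (1 - 2 / alpha - 1) * Real.exp (-t))
                  - ∫ t in Set.Ioi (s * x * d0 ^ (-alpha)),
                      t ^ (1 - 2 / alpha - 1) * Real.exp (-t)))
      ∧ (∫ x in Set.Ioi (0 : ℝ),
            x ^ ((M : ℝ) - 1) * Real.exp (-x) / (Nat.factorial (M - 1) : ℝ)
              * Real.exp (-(s * x * R ^ (-alpha))))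
          = (1 + s * R ^ (-alpha)) ^ (-(M : ℝ)) := by
  have hR : 0 < R := hd.trans hdR
  have hM0 : (0 : ℝ) < M := by exact_mod_cast hM
  have hfactorial : ((M - 1).factorial : ℝ) = Gamma M := by
    rw [← Gamma_nat_eq_factorial, Nat.cast_sub hM, Nat.cast_one, sub_add_cancel]
  have hdensity : IntegrableOn (fun x : ℝ => x ^ ((M : ℝ) - 1) * exp (-x) / (M - 1).factorial)
      (Ioi 0) :=
    ((GammaIntegral_convergent hM0).congr_fun (fun _ _ => mul_comm _ _)
      measurableSet_Ioi).div_const _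
  have hlaplace : ∫ x in Ioi 0, x ^ ((M : ℝ) - 1) * exp (-x) / (M - 1).factorial
      * exp (-(s * x * R ^ (-alpha))) = (1 + s * R ^ (-alpha)) ^ (-(M : ℝ)) := by
    have hcomm : ∀ x, s * x * R ^ (-alpha) = s * R ^ (-alpha) * x := fun x => mul_right_comm _ _ _
    simp_rw [hfactorial, hcomm]
    exact integral_rpow_mul_exp_neg_div_Gamma_mul_exp_neg_mul hM0
      (neg_one_lt_zero.trans (by positivity))
  refine ⟨?_, hlaplace⟩
  rw [← hlaplace]
  exact integral_one_sub_integral_exp_neg_mul_max_rpow_neg hdensity hs hd hdR.le (by positivity)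
end
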